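/- In a finite DAG, for any two vertices X and Y, if X ≠ Y, X is not a descendant of Y, and X is not a parent of Y, then every path between X and Y is blocked by Parents(Y), i.e., Parents(Y) d-separates X and Y. -/

import Mathlib

/-- Undirected adjacency induced by the directed edge relation. -/
def AdjE {V : Type*} (E : V → V → Prop) (a b : V) : Prop := E a b ∨ E b a

/-- `p` is a path (a list of distinct vertices, consecutive ones joined by an
edge in either direction) between `X` and `Y`. -/
def IsPathBetween {V : Type*} (E : V → V → Prop) (X Y : V) (p : List V) : Prop :=
  p.Chain' (fun a b => E a b ∨ E b a) ∧ p.head? = some X ∧ p.getLast? = some Y ∧ p.Nodup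

/-- `b` is an interior (non-endpoint) vertex of the path `p`. -/
def InteriorOn {V : Type*} (p : List V) (b : V) : Prop := ∃ a c, [a, b, c] <:+: p

/-- `b` is a collider on the path `p`: both adjacent edges of `p` point into `b`. -/
def ColliderOn {V : Type*} (E : V → V → Prop) (p : List V) (b : V) : Prop :=
  ∃ a c, [a, b, c] <:+: p ∧ E a b ∧ E c b

/-- `b` is a non-collider on `p`: an interior vertex that is not a collider. -/
def NonColliderOn {V : Type*} (E : V → V → Prop) (p : List V) (b : V) : Prop :=
  InteriorOn p b ∧ ¬ ColliderOn E p b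

/-- `b` is a descendant `d` relation: `Descend E b d` means there is a directed
path (possibly trivial) from `b` to `d`; in particular `b` is its own descendant. -/
def Descend {V : Type*} (E : V → V → Prop) (b d : V) : Prop := Relation.ReflTransGen E b d

/-- The path `p` is blocked by the set `Z`: it contains a non-collider in `Z`,
or a collider `b` with `b ∉ Z` and no descendant of `b` in `Z`. -/
def BlockedBy {V : Type*} (E : V → V → Prop) (p : List V) (Z : Set V) : Prop :=
  (∃ b, NonColliderOn E p b ∧ b ∈ Z) ∨
  (∃ b, ColliderOn E p b ∧ b ∉ Z ∧ ∀ d, Descend E b d → d ∉ Z)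

/-- `X` and `Y` are d-separated by `Z`: every path between them is blocked by `Z`. -/
def DSepBy {V : Type*} (E : V → V → Prop) (X Y : V) (Z : Set V) : Prop :=
  ∀ p, IsPathBetween E X Y p → BlockedBy E p Z

/-- The directed graph `E` is acyclic: no nontrivial directed path from a vertex
to itself. -/
def AcyclicRel {V : Type*} (E : V → V → Prop) : Prop := ∀ x, ¬ Relation.TransGen E x x
section Aux

variable {V : Type*} {E : V → V → Prop}

lemma infix_rev {p : List V} {a b c : V} (h : [a, b, c] <:+: p.reverse) :
    [c, b, a] <:+: p := by
  have h2 : ([c, b, a] : List V).reverse <:+: p.reverse := by simpa using h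
  exact List.reverse_infix.mp h2

lemma collider_rev {p : List V} {b : V} (h : ColliderOn E p.reverse b) : ColliderOn E p b := by
  obtain ⟨a, c, hinf, h1, h2⟩ := h
  exact ⟨c, a, infix_rev hinf, h2, h1⟩

lemma interior_rev {p : List V} {b : V} (h : InteriorOn p.reverse b) : InteriorOn p b := by
  obtain ⟨a, c, hinf⟩ := h
  exact ⟨c, a, infix_rev hinf⟩

lemma collider_rev' {p : List V} {b : V} (h : ColliderOn E p b) : ColliderOn E p.reverse b := by
  have h' : ColliderOn E p.reverse.reverse b := by simpa using h
  exact collider_rev h'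

lemma blocked_rev {p : List V} {Z : Set V} (h : BlockedBy E p.reverse Z) : BlockedBy E p Z := by
  rcases h with ⟨b, ⟨hint, hnc⟩, hbZ⟩ | ⟨b, hc, hbZ, hd⟩
  · exact Or.inl ⟨b, ⟨interior_rev hint, fun hc => hnc (collider_rev' hc)⟩, hbZ⟩
  · exact Or.inr ⟨b, collider_rev hc, hbZ, hd⟩

lemma triple_get {l s t : List V} {a b c : V} (e : s ++ [a, b, c] ++ t = l) :
    l[s.length]? = some a ∧ l[s.length + 1]? = some b ∧ l[s.length + 2]? = some c := by
  subst e
  rw [List.append_assoc]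
  refine ⟨?_, ?_, ?_⟩ <;>
    rw [List.getElem?_append_right (by omega)] <;> simp

lemma triple_unique {l : List V} (hnd : l.Nodup) {a₁ b c₁ a₂ c₂ : V}
    (h₁ : [a₁, b, c₁] <:+: l) (h₂ : [a₂, b, c₂] <:+: l) : a₁ = a₂ ∧ c₁ = c₂ := by
  obtain ⟨s₁, t₁, e₁⟩ := h₁
  obtain ⟨s₂, t₂, e₂⟩ := h₂
  obtain ⟨ha₁, hb₁, hc₁⟩ := triple_get e₁
  obtain ⟨ha₂, hb₂, hc₂⟩ := triple_get e₂
  have hlen : s₁.length + 1 < l.length := by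
    rw [← e₁]; simp
  have heq : s₁.length + 1 = s₂.length + 1 :=
    (List.getElem?_inj hlen hnd).mp (hb₁.trans hb₂.symm)
  have hs : s₁.length = s₂.length := by omega
  rw [hs] at ha₁ hc₁
  exact ⟨Option.some_injective _ (ha₁.symm.trans ha₂),
    Option.some_injective _ (hc₁.symm.trans hc₂)⟩

end Aux

section Main

variable {V : Type*} {E : V → V → Prop}

lemma aux_walk (hacyc : AcyclicRel E) {X Y : V}
    (hdesc : ¬ Descend E Y X) (r : List V)
    (hchain : r.Chain' (fun a b => E a b ∨ E b a)) (hlast : r.getLast? = some X) :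
    ∀ q u z, Relation.TransGen E Y z → E u z → (u :: z :: q) <:+ r →
      BlockedBy E r {w | E w Y} := by
  intro q
  induction q with
  | nil =>
    intro u z hYz huz hsuf
    obtain ⟨s, hs⟩ := hsuf
    have hz : r.getLast? = some z := by
      rw [← hs, List.getLast?_append_cons]
      simp
    rw [hlast] at hz
    have hzX : z = X := by simpa using hz.symm
    exact absurd (hzX ▸ hYz.to_reflTransGen) hdesc
  | cons b q' ih =>
    intro u z hYz huz hsuf
    have hch : (u :: z :: b :: q').Chain' (fun a b => E a b ∨ E b a) :=
      hchain.suffix hsuf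
    have hzb : E z b ∨ E b z := (List.isChain_cons_cons.mp (List.isChain_cons_cons.mp hch).2).1
    rcases hzb with hzb | hbz
    · refine ih z b (hYz.tail hzb) hzb ?_
      obtain ⟨s, hs⟩ := hsuf
      exact ⟨s ++ [u], by simpa using hs⟩
    · refine Or.inr ⟨z, ⟨u, b, ?_, huz, hbz⟩, ?_, ?_⟩
      · obtain ⟨s, hs⟩ := hsuf
        exact ⟨s, q', by simpa using hs⟩
      · intro hzY
        exact hacyc Y (hYz.trans (Relation.TransGen.single hzY))
      · intro d hd hdY
        exact hacyc Y ((hYz.trans_left hd).tail hdY)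

lemma main_rev (hacyc : AcyclicRel E) {X Y : V}
    (hdesc : ¬ Descend E Y X) (hpar : ¬ E X Y) (hne : X ≠ Y) (r : List V)
    (hchain : r.Chain' (fun a b => E a b ∨ E b a)) (hhead : r.head? = some Y)
    (hlast : r.getLast? = some X) (hnd : r.Nodup) :
    BlockedBy E r {w | E w Y} := by
  rcases r with _ | ⟨y, _ | ⟨a, t⟩⟩
  · simp at hhead
  · have h1 : y = Y := by simpa using hhead
    have h2 : y = X := by simpa using hlast
    exact absurd (h2.symm.trans h1) hne
  · obtain rfl : y = Y := by simpa using hhead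
    have hYa : E y a ∨ E a y := (List.isChain_cons_cons.mp hchain).1
    rcases hYa with hYa | haY
    · exact aux_walk hacyc hdesc _ hchain hlast t y a (.single hYa) hYa (List.suffix_refl _)
    · rcases t with _ | ⟨c, t'⟩
      · have haX : a = X := by simpa using hlast
        exact absurd (haX ▸ haY) hpar
      · have hYac : [y, a, c] <:+: (y :: a :: c :: t') := ⟨[], t', by simp⟩
        refine Or.inl ⟨a, ⟨⟨y, c, hYac⟩, ?_⟩, haY⟩
        rintro ⟨u, w, hinf, hu, hw⟩
        obtain ⟨h1, h2⟩ := triple_unique hnd hinf hYac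
        subst h1
        exact hacyc a ((Relation.TransGen.single haY).tail hu)

end Main

/-- Directed local Markov property from Y's perspective: if X is not a
descendant of Y, not a parent of Y, and X ≠ Y, then every path between X and Y
is blocked by Parents(Y). -/
theorem stmt_19 {V : Type*} [Fintype V] (E : V → V → Prop)
    (hacyc : AcyclicRel E) (X Y : V)
    (hdesc : ¬ Descend E Y X) (hpar : ¬ E X Y) (hne : X ≠ Y) :
    ∀ p, IsPathBetween E X Y p → BlockedBy E p {w | E w Y} := by
  intro p hp
  obtain ⟨hchain, hhead, hlast, hnodup⟩ := hp
  apply blocked_rev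
  refine main_rev hacyc hdesc hpar hne p.reverse ?_ ?_ ?_ ?_
  · change List.IsChain _ p.reverse; rw [List.isChain_reverse]
    exact List.IsChain.imp (fun a b h => h.symm) hchain
  · rw [List.head?_reverse]; exact hlast
  · rw [List.getLast?_reverse]; exact hhead
  · exact List.nodup_reverse.mpr hnodup
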